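/- arXiv:2008.00294 — 3 statements merged into one kernel-verified Lean document; each statement's English description precedes it below -/
import Mathlib

section
/- Let γ,δ ≥ 0 and u = v^{γ,δ}. The function f(x) = x·log|x| for x ≠ 0, f(0) = 0, satisfies ‖f u‖_∞ < ∞ and sup_{t>0} Ω²_φ(f,t)_u / t < ∞ (so f ∈ Z_1(u)), but f′(x) φ(x) u(x) is unbounded on (−1,1)∖{0} (so f ∉ W_1(u)); in particular the inequality ‖f′ uφ‖_∞ ≤ C‖f‖_{Z_1(u)} cannot hold for any constant C, i.e. the differentiation inequality ‖f′‖_{Z_{r−1}(uφ)} ≤ C‖f‖_{Z_r(u)} fails for r = 1. -/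
/-!
Write `f x = x * log x` (which is `x * log |x|`). From `f (h * y) = h * y * log h + h * f y` and the
fact that second differences annihilate linear functions, the second difference of `f` with step
`h > 0` at `h * y` is `h` times its unit-step second difference at `y`. The latter is bounded on `ℝ`:
by compactness for `|y| ≤ 2`, and for `|y| ≥ 2` because `log (1 ± 1/y) = O(1/y)`. As the step in
`Δ²_{τφ}` is `τ φ(x) ≤ τ`, this gives `Ω²_φ(f, t)_u = O(t)`. On the other hand `f' = log |x| + 1`
is unbounded near `0`, where `u φ → 1`.
-/

open Set Filter MeasureTheory intervalIntegral Polynomial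
open scoped ENNReal

noncomputable section

/-- Jacobi weight `v^{a,b}(x) = (1-x)^a (1+x)^b`. -/
def jw (a b : ℝ) : ℝ → ℝ := fun x => (1 - x) ^ a * (1 + x) ^ b

/-- `φ(x) = √(1-x²)`. -/
def phiw : ℝ → ℝ := fun x => Real.sqrt (1 - x ^ 2)

/-- Weighted sup ("uniform") norm `‖g w‖_∞` over `(-1,1)`, valued in `ℝ≥0∞`. -/
def wnorm (w g : ℝ → ℝ) : ℝ≥0∞ := ⨆ x ∈ Ioo (-1 : ℝ) 1, ENNReal.ofReal |g x * w x|

/-- Membership in the space `C_w`: continuity on `(-1,1)` together with the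
endpoint conditions (`(gw)(x) → 0` at an endpoint where `w` vanishes, continuous
extendability at an endpoint where `w` does not vanish). -/
def memC (w g : ℝ → ℝ) : Prop :=
  ContinuousOn g (Ioo (-1 : ℝ) 1) ∧
  (w 1 = 0 → Tendsto (fun x => g x * w x) (nhdsWithin 1 (Iio (1 : ℝ))) (nhds 0)) ∧
  (w 1 ≠ 0 → ∃ L, Tendsto g (nhdsWithin 1 (Iio (1 : ℝ))) (nhds L)) ∧
  (w (-1) = 0 → Tendsto (fun x => g x * w x) (nhdsWithin (-1) (Ioi (-1 : ℝ))) (nhds 0)) ∧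
  (w (-1) ≠ 0 → ∃ L, Tendsto g (nhdsWithin (-1) (Ioi (-1 : ℝ))) (nhds L))

/-- The symmetric difference `Δ^k_{τφ} g(x)`. -/
def Dk (k : ℕ) (τ : ℝ) (g : ℝ → ℝ) (x : ℝ) : ℝ :=
  ∑ i ∈ Finset.range (k + 1),
    (-1 : ℝ) ^ i * (k.choose i : ℝ) * g (x + τ * phiw x / 2 * ((k : ℝ) - 2 * i))

/-- Main part of the φ-modulus of smoothness `Ω^k_φ(g,t)_w`. -/
def Om (k : ℕ) (w g : ℝ → ℝ) (t : ℝ) : ℝ≥0∞ :=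
  ⨆ (τ : ℝ) (_ : τ ∈ Ioc (0 : ℝ) t),
    ⨆ (x : ℝ) (_ : x ∈ Icc (-1 + (2 * (k : ℝ) * τ) ^ 2) (1 - (2 * (k : ℝ) * τ) ^ 2)),
      ENNReal.ofReal (w x * |Dk k τ g x|)

/-- Zygmund seminorm of order `r` built with the `k`-th modulus:
`sup_{t>0} Ω^k_φ(g,t)_w / t^r`. -/
def ZS (r : ℝ) (k : ℕ) (w g : ℝ → ℝ) : ℝ≥0∞ :=
  ⨆ (t : ℝ) (_ : 0 < t), Om k w g t / ENNReal.ofReal (t ^ r)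

/-- Zygmund norm `‖g‖_{Z_r(w)}` (with `k = ⌊r⌋ + 1`). -/
def Zn (r : ℝ) (w g : ℝ → ℝ) : ℝ≥0∞ := wnorm w g + ZS r (⌊r⌋ + 1).toNat w g

/-- Membership in the Zygmund space `Z_r(w)`. -/
def memZ (r : ℝ) (w g : ℝ → ℝ) : Prop := memC w g ∧ Zn r w g < ⊤

/-- Weighted error of best polynomial approximation `E_m(g)_w`. -/
def Eerr (m : ℕ) (w g : ℝ → ℝ) : ℝ≥0∞ :=
  ⨅ (P : Polynomial ℝ) (_ : P.natDegree ≤ m), wnorm w (fun x => g x - P.eval x)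

/-- Unweighted error of best uniform polynomial approximation on `[-1,1]`. -/
def EerrI (m : ℕ) (g : ℝ → ℝ) : ℝ≥0∞ :=
  ⨅ (P : Polynomial ℝ) (_ : P.natDegree ≤ m),
    ⨆ x ∈ Icc (-1 : ℝ) 1, ENNReal.ofReal |g x - P.eval x|

open Real Topology

def secondDiff (g : ℝ → ℝ) (x h : ℝ) : ℝ := g (x + h) - 2 * g x + g (x - h)

lemma Dk_two (τ : ℝ) (g : ℝ → ℝ) (x : ℝ) : Dk 2 τ g x = secondDiff g x (τ * phiw x) := by
  simp only [Dk, secondDiff, Finset.sum_range_succ, Finset.sum_range_zero]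
  norm_num
  ring_nf

lemma abs_log_one_add_le {u : ℝ} (hu : |u| ≤ 1 / 2) : |log (1 + u)| ≤ 2 * |u| := by
  have h := abs_log_sub_add_sum_range_le (x := -u) (by rw [abs_neg]; linarith) 0
  simp only [Finset.range_zero, Finset.sum_empty, zero_add, sub_neg_eq_add, abs_neg,
    pow_one] at h
  calc |log (1 + u)| ≤ |u| / (1 - |u|) := h
    _ ≤ 2 * |u| := by rw [div_le_iff₀ (by linarith)]; nlinarith [abs_nonneg u]

lemma abs_mul_log_le_one {x : ℝ} (hx : |x| ≤ 1) : |x * log x| ≤ 1 := by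
  rcases eq_or_ne x 0 with rfl | hx0
  · simp
  · have h := abs_log_mul_self_lt |x| (abs_pos.mpr hx0) hx
    rw [abs_mul, abs_abs, mul_comm, log_abs] at h
    exact (abs_mul x (log x)).trans_le h.le

lemma secondDiff_mul_log_scale {h : ℝ} (hh : 0 < h) (y : ℝ) :
    secondDiff (fun x => x * log x) (h * y) h = h * secondDiff (fun x => x * log x) y 1 := by
  have scale : ∀ s, h * s * log (h * s) = h * s * log h + h * (s * log s) := by
    intro s
    rcases eq_or_ne s 0 with rfl | hs
    · simp
    · rw [log_mul hh.ne' hs]; ring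
  simp only [secondDiff]
  rw [show h * y + h = h * (y + 1) by ring, show h * y - h = h * (y - 1) by ring,
    scale, scale, scale]
  ring

lemma abs_secondDiff_mul_log_le_of_two_le_abs {y : ℝ} (hy : 2 ≤ |y|) :
    |secondDiff (fun x => x * log x) y 1| ≤ 6 := by
  have hy0 : y ≠ 0 := by rintro rfl; norm_num at hy
  have hinv : |y⁻¹| ≤ 1 / 2 := by
    rw [abs_inv]; exact inv_le_of_inv_le₀ (by norm_num) (by linarith)
  have hinv' : |-y⁻¹| ≤ 1 / 2 := by rwa [abs_neg]
  -- `log (y ± 1) = log y + log (1 ± y⁻¹)`, and the `log y` terms cancel.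
  have split : ∀ u, |u| ≤ 1 / 2 → log (y * (1 + u)) = log y + log (1 + u) := fun u hu =>
    log_mul hy0 (by have := neg_le_of_abs_le hu; linarith)
  have expand : secondDiff (fun x => x * log x) y 1
      = (y + 1) * log (1 + y⁻¹) + (y - 1) * log (1 + -y⁻¹) := by
    simp only [secondDiff]
    rw [show y + 1 = y * (1 + y⁻¹) by field_simp, show y - 1 = y * (1 + -y⁻¹) by field_simp; ring,
      split _ hinv, split _ hinv']
    field_simp
    ring
  have term : ∀ s u, |s| ≤ |y| + 1 → |u| ≤ 1 / 2 → |u| = |y|⁻¹ → |s * log (1 + u)| ≤ 3 := by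
    intro s u hs hu hu'
    rw [abs_mul]
    calc |s| * |log (1 + u)| ≤ (|y| + 1) * (2 * |y|⁻¹) :=
          mul_le_mul hs (abs_log_one_add_le hu |>.trans_eq (by rw [hu'])) (abs_nonneg _)
            (by positivity)
      _ = 2 + 2 * |y|⁻¹ := by field_simp
      _ ≤ 3 := by rw [abs_inv] at hinv; linarith
  rw [expand]
  refine (abs_add_le _ _).trans ?_
  linarith [term (y + 1) y⁻¹ (by simpa using abs_add_le y 1) hinv (abs_inv y),
    term (y - 1) (-y⁻¹) (by simpa using abs_sub y 1) hinv' (by rw [abs_neg, abs_inv])]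

lemma exists_abs_secondDiff_mul_log_le : ∃ C, ∀ y, |secondDiff (fun x => x * log x) y 1| ≤ C := by
  have hcont : Continuous (secondDiff (fun x => x * log x) · 1) := by
    unfold secondDiff; fun_prop
  obtain ⟨C, hC⟩ := (isCompact_Icc (a := (-2 : ℝ)) (b := 2)).exists_bound_of_continuousOn
    hcont.continuousOn
  refine ⟨max C 6, fun y => ?_⟩
  rcases le_or_gt |y| 2 with hy | hy
  · exact (hC y (abs_le.mp hy)).trans (le_max_left _ _)
  · exact (abs_secondDiff_mul_log_le_of_two_le_abs hy.le).trans (le_max_right _ _)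

lemma exists_abs_secondDiff_mul_log_le_mul :
    ∃ C, ∀ x h, 0 ≤ h → |secondDiff (fun x => x * log x) x h| ≤ C * h := by
  obtain ⟨C, hC⟩ := exists_abs_secondDiff_mul_log_le
  refine ⟨C, fun x h hh => ?_⟩
  rcases hh.eq_or_lt with rfl | hh
  · rw [secondDiff, add_zero, sub_zero, mul_zero]; ring_nf; simp
  · rw [show x = h * (x / h) by field_simp, secondDiff_mul_log_scale hh, abs_mul, abs_of_pos hh,
      mul_comm C]
    exact mul_le_mul_of_nonneg_left (hC _) hh.le

lemma jw_nonneg (γ δ : ℝ) {x : ℝ} (hx : x ∈ Ioo (-1 : ℝ) 1) : 0 ≤ jw γ δ x :=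
  mul_nonneg (rpow_nonneg (by linarith [hx.2]) _) (rpow_nonneg (by linarith [hx.1]) _)

lemma jw_le {γ δ x : ℝ} (hγ : 0 ≤ γ) (hδ : 0 ≤ δ) (hx : x ∈ Ioo (-1 : ℝ) 1) :
    jw γ δ x ≤ 2 ^ γ * 2 ^ δ :=
  mul_le_mul (rpow_le_rpow (by linarith [hx.2]) (by linarith [hx.1]) hγ)
    (rpow_le_rpow (by linarith [hx.1]) (by linarith [hx.2]) hδ)
    (rpow_nonneg (by linarith [hx.1]) _) (rpow_nonneg zero_le_two _)

lemma phiw_le_one (x : ℝ) : phiw x ≤ 1 :=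
  sqrt_le_one.mpr (by nlinarith [sq_nonneg x])

lemma tendsto_jw_mul_phiw_nhds_zero (γ δ : ℝ) :
    Tendsto (fun x => jw γ δ x * phiw x) (𝓝 0) (𝓝 1) := by
  have hcont : ContinuousAt (fun x => jw γ δ x * phiw x) 0 := by
    unfold jw phiw
    exact ((continuousAt_const.sub continuousAt_id).rpow_const (Or.inl (by norm_num))).mul
      ((continuousAt_const.add continuousAt_id).rpow_const (Or.inl (by norm_num))) |>.mul
      (by fun_prop)
  simpa [jw, phiw] using hcont.tendsto

lemma wnorm_le_ofReal {w g : ℝ → ℝ} {M : ℝ} (h : ∀ x ∈ Ioo (-1 : ℝ) 1, |g x * w x| ≤ M) :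
    wnorm w g ≤ ENNReal.ofReal M :=
  iSup₂_le fun x hx => ENNReal.ofReal_le_ofReal (h x hx)

lemma wnorm_eq_top_of_tendsto {w g : ℝ → ℝ} {l : Filter ℝ} [l.NeBot]
    (hl : ∀ᶠ x in l, x ∈ Ioo (-1 : ℝ) 1) (h : Tendsto (fun x => |g x * w x|) l atTop) :
    wnorm w g = ⊤ := by
  refine ENNReal.eq_top_of_forall_nnreal_le fun r => ?_
  obtain ⟨x, hx, hrx⟩ := (hl.and (h.eventually_ge_atTop r)).exists
  calc (r : ℝ≥0∞) = ENNReal.ofReal r := (ENNReal.ofReal_coe_nnreal).symm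
    _ ≤ ENNReal.ofReal |g x * w x| := ENNReal.ofReal_le_ofReal hrx
    _ ≤ wnorm w g := le_iSup₂_of_le (f := fun x _ => ENNReal.ofReal |g x * w x|) x hx le_rfl

lemma ZS_one_le_ofReal {k : ℕ} {w g : ℝ → ℝ} {K : ℝ} (hK : 0 ≤ K)
    (h : ∀ τ > 0, ∀ x ∈ Icc (-1 + (2 * (k : ℝ) * τ) ^ 2) (1 - (2 * (k : ℝ) * τ) ^ 2),
      w x * |Dk k τ g x| ≤ K * τ) :
    ZS 1 k w g ≤ ENNReal.ofReal K := by
  refine iSup₂_le fun t ht => ENNReal.div_le_of_le_mul ?_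
  rw [rpow_one, ← ENNReal.ofReal_mul hK]
  refine iSup₂_le fun τ hτ => iSup₂_le fun x hx => ENNReal.ofReal_le_ofReal ?_
  exact (h τ hτ.1 x hx).trans (mul_le_mul_of_nonneg_left hτ.2 hK)

lemma wnorm_jw_mul_log_lt_top {γ δ : ℝ} (hγ : 0 ≤ γ) (hδ : 0 ≤ δ) :
    wnorm (jw γ δ) (fun x => x * log x) < ⊤ := by
  refine (wnorm_le_ofReal (M := 2 ^ γ * 2 ^ δ) fun x hx => ?_).trans_lt ENNReal.ofReal_lt_top
  rw [abs_mul, abs_of_nonneg (jw_nonneg γ δ hx), ← one_mul (2 ^ γ * 2 ^ δ)]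
  exact mul_le_mul (abs_mul_log_le_one (abs_le.mpr ⟨hx.1.le, hx.2.le⟩)) (jw_le hγ hδ hx)
    (jw_nonneg γ δ hx) zero_le_one

lemma ZS_one_two_jw_mul_log_lt_top {γ δ : ℝ} (hγ : 0 ≤ γ) (hδ : 0 ≤ δ) :
    ZS 1 2 (jw γ δ) (fun x => x * log x) < ⊤ := by
  obtain ⟨C, hC⟩ := exists_abs_secondDiff_mul_log_le_mul
  have hC0 : 0 ≤ C := by simpa using (abs_nonneg _).trans (hC 0 1 zero_le_one)
  refine (ZS_one_le_ofReal (K := 2 ^ γ * 2 ^ δ * C) (by positivity) fun τ hτ x hx => ?_).trans_lt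
    ENNReal.ofReal_lt_top
  have hτ2 : 0 < (2 * ((2 : ℕ) : ℝ) * τ) ^ 2 := by positivity
  have hxI : x ∈ Ioo (-1 : ℝ) 1 := ⟨by linarith [hx.1], by linarith [hx.2]⟩
  have hstep : 0 ≤ τ * phiw x := mul_nonneg hτ.le (sqrt_nonneg _)
  rw [Dk_two]
  calc jw γ δ x * |secondDiff (fun x => x * log x) x (τ * phiw x)|
      ≤ (2 ^ γ * 2 ^ δ) * (C * τ) :=
        mul_le_mul (jw_le hγ hδ hxI) ((hC x _ hstep).trans (mul_le_mul_of_nonneg_left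
          (mul_le_of_le_one_right hτ.le (phiw_le_one x)) hC0)) (abs_nonneg _) (by positivity)
    _ = 2 ^ γ * 2 ^ δ * C * τ := by ring

lemma wnorm_jw_mul_phiw_deriv_mul_log_eq_top (γ δ : ℝ) :
    wnorm (fun x => jw γ δ x * phiw x) (deriv fun x => x * log x) = ⊤ := by
  refine wnorm_eq_top_of_tendsto (l := 𝓝[≠] 0)
    (nhdsWithin_le_nhds (Ioo_mem_nhds (by norm_num) (by norm_num))) ?_
  have hderiv : ∀ᶠ x in 𝓝[≠] (0 : ℝ), |deriv (fun x => x * log x) x * (jw γ δ x * phiw x)|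
      = |log x + 1| * |jw γ δ x * phiw x| := by
    filter_upwards [self_mem_nhdsWithin] with x hx
    rw [deriv_mul_log hx, abs_mul]
  refine Tendsto.congr' (EventuallyEq.symm hderiv) (Tendsto.atTop_mul_pos one_pos ?_ ?_)
  · exact tendsto_abs_atBot_atTop.comp (tendsto_atBot_add_const_right _ 1 tendsto_log_nhdsNE_zero)
  · simpa using ((tendsto_jw_mul_phiw_nhds_zero γ δ).mono_left nhdsWithin_le_nhds).abs

/-- For `γ,δ ≥ 0`, `u = v^{γ,δ}`, the function `f(x) = x log|x|`
belongs to `Z_1(u)` (finite weighted sup norm and finite Zygmund seminorm with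
`k = 2`), but `f' u φ` is unbounded on `(-1,1)`, so no inequality
`‖f' uφ‖_∞ ≤ C ‖f‖_{Z_1(u)}` can hold. -/
theorem statement3 (γ δ : ℝ) (hγ : 0 ≤ γ) (hδ : 0 ≤ δ) :
    wnorm (jw γ δ) (fun x => x * Real.log |x|) < ⊤ ∧
    ZS 1 2 (jw γ δ) (fun x => x * Real.log |x|) < ⊤ ∧
    wnorm (fun x => jw γ δ x * phiw x) (deriv fun x => x * Real.log |x|) = ⊤ ∧
    ¬∃ C : ℝ, 0 < C ∧
        wnorm (fun x => jw γ δ x * phiw x) (deriv fun x => x * Real.log |x|) ≤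
          ENNReal.ofReal C * Zn 1 (jw γ δ) (fun x => x * Real.log |x|) := by
  simp only [log_abs]
  have hsup := wnorm_jw_mul_log_lt_top hγ hδ
  have hZS := ZS_one_two_jw_mul_log_lt_top hγ hδ
  have hderiv := wnorm_jw_mul_phiw_deriv_mul_log_eq_top γ δ
  refine ⟨hsup, hZS, hderiv, ?_⟩
  rintro ⟨C, -, hC⟩
  have hZn : Zn 1 (jw γ δ) (fun x => x * log x) < ⊤ := by
    rw [Zn, show (⌊(1 : ℝ)⌋ + 1).toNat = 2 by rw [Int.floor_one]; rfl]
    exact ENNReal.add_lt_top.mpr ⟨hsup, hZS⟩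
  rw [hderiv, top_le_iff] at hC
  exact ENNReal.mul_ne_top ENNReal.ofReal_ne_top hZn.ne hC
end
end

section
/- Let 0 < α < 1, ρ = v^{α,1−α}, u = v^{γ,δ} with γ,δ ≥ 0, and let h : [−1,1]² → ℝ be measurable such that sup_{|y|<1} (uφ)(y) ∫_{−1}^1 |h(x,y)| u(x)^{−1} dx < ∞ and, for some s > 0 and C₀ > 0, A(τ) ≤ C₀ τ^s for all τ ∈ (0, 1/2], where A(τ) := sup_{y∈I_τ} (uφ)(y) ∫_{−1}^1 |h(x, y+τφ(y)/2) − h(x, y−τφ(y)/2)| u(x)^{−1} dx and I_τ := [−1+4τ², 1−4τ²]. Define (Hf)(y) := (1/π)∫_{−1}^1 h(x,y) f(x) ρ(x) dx. Then there exists C, independent of f and t, such that Ω¹_φ(Hf, t)_{uφ} ≤ C t^s ‖f uρ‖_∞ for every t > 0 and every f with ‖f uρ‖_∞ < ∞. -/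
/-! For `y ∈ I_τ` both points `y ± τφ(y)/2` lie in `(-1,1)`, so the first difference of `Hf`
at `y` is `(1/π) ∫ (h(x, y + τφ(y)/2) - h(x, y - τφ(y)/2)) f(x) ρ(x) dx`. Since
`|f ρ| ≤ ‖f uρ‖_∞ / u` on `(-1,1)`, its `uφ`-weighted size is at most
`‖f uρ‖_∞ A(τ) / π ≤ (C₀/π) τ^s ‖f uρ‖_∞ ≤ (C₀/π) t^s ‖f uρ‖_∞`; the hypothesis on `A`
applies because `I_τ ≠ ∅` forces `τ ≤ 1/2`. -/

open Set Filter MeasureTheory intervalIntegral Polynomial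
open scoped ENNReal

noncomputable section

lemma jw_nonneg_s11 (a b : ℝ) {x : ℝ} (hx : x ∈ Icc (-1 : ℝ) 1) : 0 ≤ jw a b x :=
  mul_nonneg (Real.rpow_nonneg (by linarith [hx.2]) _) (Real.rpow_nonneg (by linarith [hx.1]) _)

lemma jw_pos (a b : ℝ) {x : ℝ} (hx : x ∈ Ioo (-1 : ℝ) 1) : 0 < jw a b x :=
  mul_pos (Real.rpow_pos_of_pos (by linarith [hx.2]) _) (Real.rpow_pos_of_pos (by linarith [hx.1]) _)

lemma measurable_jw (a b : ℝ) : Measurable (jw a b) := by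
  unfold jw; fun_prop

lemma Dk_one (τ : ℝ) (g : ℝ → ℝ) (x : ℝ) :
    Dk 1 τ g x = g (x + τ * phiw x / 2) - g (x - τ * phiw x / 2) := by
  simp [Dk, Finset.sum_range_succ]
  ring_nf

lemma Om_one_le {w g : ℝ → ℝ} {t M : ℝ}
    (hM : ∀ τ ∈ Ioc (0 : ℝ) t, ∀ y ∈ Icc (-1 + 4 * τ ^ 2) (1 - 4 * τ ^ 2),
      w y * |g (y + τ * phiw y / 2) - g (y - τ * phiw y / 2)| ≤ M) :
    Om 1 w g t ≤ ENNReal.ofReal M := by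
  refine iSup₂_le fun τ hτ => iSup₂_le fun y hy => ENNReal.ofReal_le_ofReal ?_
  rw [Dk_one]
  have hsq : (2 * ((1 : ℕ) : ℝ) * τ) ^ 2 = 4 * τ ^ 2 := by push_cast; ring
  exact hM τ hτ y (by rwa [hsq] at hy)

/-- On `I_τ` the step `τφ(y)/2` stays below the distance `1 ∓ y` to the endpoints, since
`(τφ(y)/2)² = τ²(1-y)(1+y)/4` and `4τ² ≤ 1 ∓ y`. -/
lemma shift_mem_Ioo {τ y : ℝ} (hτ : 0 < τ) (hy : y ∈ Icc (-1 + 4 * τ ^ 2) (1 - 4 * τ ^ 2)) :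
    y + τ * phiw y / 2 ∈ Ioo (-1 : ℝ) 1 ∧ y - τ * phiw y / 2 ∈ Ioo (-1 : ℝ) 1 := by
  obtain ⟨hy₁, hy₂⟩ := hy
  have hτ2 : 0 < τ ^ 2 := by positivity
  have hφ : 0 ≤ phiw y := Real.sqrt_nonneg _
  have hstep_sq : (τ * phiw y / 2) ^ 2 = τ ^ 2 * ((1 - y) * (1 + y)) / 4 := by
    rw [div_pow, mul_pow, phiw, Real.sq_sqrt (by nlinarith)]; ring
  have hstep_lt : ∀ d e, d * e = (1 - y) * (1 + y) → 4 * τ ^ 2 ≤ d → 0 ≤ e → e ≤ 2 →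
      τ * phiw y / 2 < d := fun d e hde hd he he' => by
    have hd0 : 0 < d := by linarith
    refine lt_of_pow_lt_pow_left₀ 2 hd0.le ?_
    rw [hstep_sq, ← hde]
    nlinarith [mul_le_mul_of_nonneg_right hd (mul_nonneg hd0.le he), mul_pos hd0 hd0]
  have h₁ := hstep_lt (1 - y) (1 + y) rfl (by linarith) (by nlinarith) (by nlinarith)
  have h₂ := hstep_lt (1 + y) (1 - y) (mul_comm _ _) (by linarith) (by nlinarith) (by nlinarith)
  have h₀ : 0 ≤ τ * phiw y / 2 := by positivity
  exact ⟨⟨by linarith, by linarith⟩, ⟨by linarith, by linarith⟩⟩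

section WeightedBound

variable {a b F : ℝ} {u w f H : ℝ → ℝ}

lemma abs_mul_le_of_weighted_bound {x : ℝ} (hu : 0 < u x) (hw : 0 ≤ w x)
    (hfb : |f x| * (u x * w x) ≤ F) : |H x * f x * w x| ≤ F * (|H x| / u x) := by
  have hfw : |f x| * w x ≤ F / u x := by
    rw [le_div_iff₀ hu]; linarith
  calc |H x * f x * w x| = |H x| * (|f x| * w x) := by
        rw [abs_mul, abs_mul, abs_of_nonneg hw, mul_assoc]
    _ ≤ |H x| * (F / u x) := mul_le_mul_of_nonneg_left hfw (abs_nonneg _)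
    _ = F * (|H x| / u x) := by ring

variable (hab : a ≤ b) (hu : ∀ x ∈ Ioo a b, 0 < u x) (hw : ∀ x ∈ Ioo a b, 0 ≤ w x)
  (hfb : ∀ x ∈ Ioo a b, |f x| * (u x * w x) ≤ F)
include hab hu hw hfb

lemma intervalIntegrable_mul_of_weighted_bound (hH : Measurable H) (hf : Measurable f)
    (hwm : Measurable w) (hint : IntervalIntegrable (fun x => |H x| / u x) volume a b) :
    IntervalIntegrable (fun x => H x * f x * w x) volume a b := by
  rw [intervalIntegrable_iff_integrableOn_Ioo_of_le hab] at hint ⊢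
  refine (hint.const_mul F).mono' ((hH.mul hf).mul hwm).aestronglyMeasurable.restrict ?_
  exact ae_restrict_of_forall_mem measurableSet_Ioo fun x hx =>
    abs_mul_le_of_weighted_bound (hu x hx) (hw x hx) (hfb x hx)

lemma abs_integral_mul_le_of_weighted_bound
    (hint : IntervalIntegrable (fun x => |H x| / u x) volume a b) :
    |∫ x in a..b, H x * f x * w x| ≤ F * ∫ x in a..b, |H x| / u x := by
  rw [intervalIntegrable_iff_integrableOn_Ioo_of_le hab] at hint
  simp only [intervalIntegral.integral_of_le hab, integral_Ioc_eq_integral_Ioo,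
    ← MeasureTheory.integral_const_mul, ← Real.norm_eq_abs]
  exact norm_integral_le_of_norm_le (hint.const_mul F) <|
    ae_restrict_of_forall_mem measurableSet_Ioo fun x hx =>
      abs_mul_le_of_weighted_bound (hu x hx) (hw x hx) (hfb x hx)

lemma abs_integral_sub_le_of_weighted_bound {H₁ H₂ : ℝ → ℝ} (hH₁ : Measurable H₁)
    (hH₂ : Measurable H₂) (hf : Measurable f) (hwm : Measurable w)
    (hint₁ : IntervalIntegrable (fun x => |H₁ x| / u x) volume a b)
    (hint₂ : IntervalIntegrable (fun x => |H₂ x| / u x) volume a b)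
    (hint : IntervalIntegrable (fun x => |H₁ x - H₂ x| / u x) volume a b) :
    |(∫ x in a..b, H₁ x * f x * w x) - ∫ x in a..b, H₂ x * f x * w x| ≤
      F * ∫ x in a..b, |H₁ x - H₂ x| / u x := by
  rw [← intervalIntegral.integral_sub
    (intervalIntegrable_mul_of_weighted_bound hab hu hw hfb hH₁ hf hwm hint₁)
    (intervalIntegrable_mul_of_weighted_bound hab hu hw hfb hH₂ hf hwm hint₂)]
  simp_rw [← sub_mul]
  exact abs_integral_mul_le_of_weighted_bound hab hu hw hfb hint

end WeightedBound

theorem statement11_general (α γ δ s C₀ B : ℝ) (hs : 0 < s) (hC₀ : 0 < C₀)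
    (h : ℝ → ℝ → ℝ) (hmeas : Measurable (Function.uncurry h))
    (hB : ∀ y ∈ Ioo (-1 : ℝ) 1,
      IntervalIntegrable (fun x => |h x y| / jw γ δ x) MeasureTheory.volume (-1) 1 ∧
      (jw γ δ y * phiw y) * ∫ x in (-1 : ℝ)..1, |h x y| / jw γ δ x ≤ B)
    (hA : ∀ τ ∈ Ioc (0 : ℝ) (1 / 2), ∀ y ∈ Icc (-1 + 4 * τ ^ 2) (1 - 4 * τ ^ 2),
      IntervalIntegrable
          (fun x => |h x (y + τ * phiw y / 2) - h x (y - τ * phiw y / 2)| / jw γ δ x)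
          MeasureTheory.volume (-1) 1 ∧
      (jw γ δ y * phiw y) *
          ∫ x in (-1 : ℝ)..1,
            |h x (y + τ * phiw y / 2) - h x (y - τ * phiw y / 2)| / jw γ δ x ≤
        C₀ * τ ^ s) :
    ∃ C : ℝ, 0 < C ∧ ∀ (f : ℝ → ℝ) (F : ℝ), Measurable f → 0 ≤ F →
      (∀ x ∈ Ioo (-1 : ℝ) 1, |f x| * (jw γ δ x * jw α (1 - α) x) ≤ F) →
      ∀ t : ℝ, 0 < t →
        Om 1 (fun x => jw γ δ x * phiw x)
            (fun y => (1 / Real.pi) * ∫ x in (-1 : ℝ)..1, h x y * f x * jw α (1 - α) x) t ≤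
          ENNReal.ofReal (C * t ^ s * F) := by
  refine ⟨C₀ / Real.pi, by positivity, fun f F hf hF hfb t ht => Om_one_le fun τ hτ y hy => ?_⟩
  have hτ_le : τ ≤ 1 / 2 := by nlinarith [hy.1.trans hy.2, hτ.1]
  obtain ⟨hyp, hym⟩ := shift_mem_Ioo hτ.1 hy
  obtain ⟨hAint, hAbd⟩ := hA τ ⟨hτ.1, hτ_le⟩ y hy
  have hsec : ∀ z, Measurable fun x => h x z := fun z =>
    hmeas.comp (measurable_id.prodMk measurable_const)
  have hdiff := abs_integral_sub_le_of_weighted_bound (by norm_num)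
    (fun x hx => jw_pos γ δ hx) (fun x hx => (jw_pos α (1 - α) hx).le) hfb (hsec _) (hsec _) hf
    (measurable_jw _ _) (hB _ hyp).1 (hB _ hym).1 hAint
  have huφ : 0 ≤ jw γ δ y * phiw y :=
    mul_nonneg (jw_nonneg_s11 _ _ ⟨by nlinarith [hy.1], by nlinarith [hy.2]⟩) (Real.sqrt_nonneg _)
  have hτt : τ ^ s ≤ t ^ s := Real.rpow_le_rpow hτ.1.le hτ.2 hs.le
  rw [← mul_sub, abs_mul, abs_of_pos (by positivity : 0 < 1 / Real.pi)]
  calc _ ≤ jw γ δ y * phiw y * (1 / Real.pi * (F * ∫ x in (-1 : ℝ)..1,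
          |h x (y + τ * phiw y / 2) - h x (y - τ * phiw y / 2)| / jw γ δ x)) := by
        gcongr
    _ = F / Real.pi * (jw γ δ y * phiw y * ∫ x in (-1 : ℝ)..1,
          |h x (y + τ * phiw y / 2) - h x (y - τ * phiw y / 2)| / jw γ δ x) := by ring
    _ ≤ F / Real.pi * (C₀ * t ^ s) := by
        gcongr ?_ * ?_
        exact hAbd.trans (by gcongr)
    _ = C₀ / Real.pi * t ^ s * F := by ring

/-- Under the boundedness condition on `(uφ)(y)∫|h(x,y)|u(x)⁻¹dx`
and the smoothness condition `A(τ) ≤ C₀ τ^s` for `τ ∈ (0,1/2]`, there is `C`,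
independent of `f` and `t`, with `Ω¹_φ(Hf,t)_{uφ} ≤ C t^s ‖f uρ‖_∞` for every
`t > 0` and every `f` with `‖f uρ‖_∞ < ∞`. -/
theorem statement11 (α γ δ s C₀ B : ℝ) (hα0 : 0 < α) (hα1 : α < 1)
    (hγ : 0 ≤ γ) (hδ : 0 ≤ δ) (hs : 0 < s) (hC₀ : 0 < C₀)
    (h : ℝ → ℝ → ℝ) (hmeas : Measurable (Function.uncurry h))
    (hB : ∀ y ∈ Ioo (-1 : ℝ) 1,
      IntervalIntegrable (fun x => |h x y| / jw γ δ x) MeasureTheory.volume (-1) 1 ∧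
      (jw γ δ y * phiw y) * ∫ x in (-1 : ℝ)..1, |h x y| / jw γ δ x ≤ B)
    (hA : ∀ τ ∈ Ioc (0 : ℝ) (1 / 2), ∀ y ∈ Icc (-1 + 4 * τ ^ 2) (1 - 4 * τ ^ 2),
      IntervalIntegrable
          (fun x => |h x (y + τ * phiw y / 2) - h x (y - τ * phiw y / 2)| / jw γ δ x)
          MeasureTheory.volume (-1) 1 ∧
      (jw γ δ y * phiw y) *
          ∫ x in (-1 : ℝ)..1,
            |h x (y + τ * phiw y / 2) - h x (y - τ * phiw y / 2)| / jw γ δ x ≤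
        C₀ * τ ^ s) :
    ∃ C : ℝ, 0 < C ∧ ∀ (f : ℝ → ℝ) (F : ℝ), Measurable f → 0 ≤ F →
      (∀ x ∈ Ioo (-1 : ℝ) 1, |f x| * (jw γ δ x * jw α (1 - α) x) ≤ F) →
      ∀ t : ℝ, 0 < t →
        Om 1 (fun x => jw γ δ x * phiw x)
            (fun y => (1 / Real.pi) * ∫ x in (-1 : ℝ)..1, h x y * f x * jw α (1 - α) x) t ≤
          ENNReal.ofReal (C * t ^ s * F) :=
  statement11_general α γ δ s C₀ B hs hC₀ h hmeas hB hA
end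
end

section
/- Let γ,δ ≥ 0, u = v^{γ,δ}. Let σ : (−1,1) → ℝ be such that σφ extends to a continuous function on [−1,1], and let f : (−1,1) → ℝ with ‖f uφ‖_∞ < ∞. Then for every integer m ≥ 1, E_m(σφ·f)_{uφ} ≤ ‖σφ‖_∞ · E_{⌊m/2⌋}(f)_{uφ} + 2‖f uφ‖_∞ · E_{⌊m/2⌋}(σφ), where E_{⌊m/2⌋}(σφ) denotes the error of best uniform (unweighted) polynomial approximation of σφ on [−1,1] by polynomials of degree at most ⌊m/2⌋. -/
open Set Filter MeasureTheory intervalIntegral Polynomial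
open scoped ENNReal

noncomputable section

/-! For `deg P, deg Q ≤ m/2` the product `QP` has degree `≤ m`, and
`(σφ f - QP) u = σφ (f - P) u + (σφ - Q) P u` with `|P u| ≤ |f u| + |(f - P) u|`.
Taking the infimum over `P` turns `‖(f - P) u‖` into `E_{⌊m/2⌋}(f)_u ≤ ‖f u‖`, which gives the
factor `2‖f u‖` in front of `‖σφ - Q‖`; then take the infimum over `Q`. -/

/-- `EerrI m g` is the infimum of `unifErr g Q` over `Q.natDegree ≤ m`. -/
def unifErr (g : ℝ → ℝ) (Q : ℝ[X]) : ℝ≥0∞ :=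
  ⨆ x ∈ Icc (-1 : ℝ) 1, ENNReal.ofReal |g x - Q.eval x|

lemma ENNReal.le_mul_iInf₂_add {ι : Type*} {p : ι → Prop} (hp : ∃ i, p i) {a b c : ℝ≥0∞}
    {f : ι → ℝ≥0∞} (ha : a ≠ ⊤) (h : ∀ i, p i → c ≤ a * f i + b) :
    c ≤ a * (⨅ (i) (_ : p i), f i) + b := by
  have : Nonempty (Subtype p) := hp.elim fun i hi => ⟨⟨i, hi⟩⟩
  rw [iInf_subtype', ENNReal.mul_iInf (by simp [ha]), ENNReal.iInf_add]
  exact le_iInf fun i => h i i.2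

lemma abs_mul_sub_mul_mul_le (a b c d w : ℝ) :
    |(a * b - c * d) * w| ≤ |a| * |(b - d) * w| + |a - c| * (|b * w| + |(b - d) * w|) := by
  have hdw : |d * w| ≤ |b * w| + |(b - d) * w| := by
    simpa [sub_mul] using abs_sub (b * w) ((b - d) * w)
  calc |(a * b - c * d) * w| = |a * ((b - d) * w) + (a - c) * (d * w)| := by ring_nf
    _ ≤ |a| * |(b - d) * w| + |a - c| * |d * w| := by
        simpa only [abs_mul] using abs_add_le (a * ((b - d) * w)) ((a - c) * (d * w))
    _ ≤ _ := by gcongr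

lemma unifErr_ne_top {g : ℝ → ℝ} {M : ℝ} (hg : ∀ x ∈ Icc (-1 : ℝ) 1, |g x| ≤ M) (Q : ℝ[X]) :
    unifErr g Q ≠ ⊤ := by
  obtain ⟨C, hC⟩ := (isCompact_Icc (a := (-1 : ℝ)) (b := 1)).exists_bound_of_continuousOn
    Q.continuous.continuousOn
  refine ne_top_of_le_ne_top (ENNReal.ofReal_ne_top (r := M + C)) (iSup₂_le fun x hx => ?_)
  refine ENNReal.ofReal_le_ofReal ((abs_sub _ _).trans (add_le_add (hg x hx) ?_))
  simpa using hC x hx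

lemma wnorm_mul_sub_mul_le {w g f : ℝ → ℝ} {M F : ℝ}
    (hg : ∀ x ∈ Ioo (-1 : ℝ) 1, |g x| ≤ M) (hf : ∀ x ∈ Ioo (-1 : ℝ) 1, |f x * w x| ≤ F)
    (Q P : ℝ[X]) :
    wnorm w (fun x => g x * f x - (Q * P).eval x) ≤
      ENNReal.ofReal M * wnorm w (fun x => f x - P.eval x) +
        unifErr g Q * (ENNReal.ofReal F + wnorm w (fun x => f x - P.eval x)) := by
  refine iSup₂_le fun x hx => ?_
  have hfP : ENNReal.ofReal |(f x - P.eval x) * w x| ≤ wnorm w (fun x => f x - P.eval x) :=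
    le_iSup₂ (f := fun y (_ : y ∈ Ioo (-1 : ℝ) 1) => ENNReal.ofReal |(f y - P.eval y) * w y|) x hx
  have hgQ : ENNReal.ofReal |g x - Q.eval x| ≤ unifErr g Q :=
    le_iSup₂ (f := fun y (_ : y ∈ Icc (-1 : ℝ) 1) => ENNReal.ofReal |g y - Q.eval y|) x
      (Ioo_subset_Icc_self hx)
  calc ENNReal.ofReal |(g x * f x - (Q * P).eval x) * w x|
      ≤ ENNReal.ofReal |g x| * ENNReal.ofReal |(f x - P.eval x) * w x| +
          ENNReal.ofReal |g x - Q.eval x| *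
            (ENNReal.ofReal |f x * w x| + ENNReal.ofReal |(f x - P.eval x) * w x|) := by
        rw [← ENNReal.ofReal_add (abs_nonneg _) (abs_nonneg _),
          ← ENNReal.ofReal_mul (abs_nonneg _), ← ENNReal.ofReal_mul (abs_nonneg _),
          ← ENNReal.ofReal_add (by positivity) (by positivity), eval_mul]
        exact ENNReal.ofReal_le_ofReal (abs_mul_sub_mul_mul_le _ _ _ _ _)
    _ ≤ _ := by
        gcongr
        · exact hg x hx
        · exact hf x hx

lemma Eerr_le_ofReal {w f : ℝ → ℝ} {F : ℝ} (hf : ∀ x ∈ Ioo (-1 : ℝ) 1, |f x * w x| ≤ F)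
    (n : ℕ) : Eerr n w f ≤ ENNReal.ofReal F :=
  (iInf₂_le 0 (by simp)).trans
    (iSup₂_le fun x hx => by simpa using ENNReal.ofReal_le_ofReal (hf x hx))

lemma Eerr_mul_le {w g f : ℝ → ℝ} {M F : ℝ}
    (hg : ∀ x ∈ Icc (-1 : ℝ) 1, |g x| ≤ M) (hf : ∀ x ∈ Ioo (-1 : ℝ) 1, |f x * w x| ≤ F)
    {n m : ℕ} (hnm : n + n ≤ m) {Q : ℝ[X]} (hQ : Q.natDegree ≤ n) :
    Eerr m w (fun x => g x * f x) ≤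
      ENNReal.ofReal M * Eerr n w f + ENNReal.ofReal (2 * F) * unifErr g Q := by
  have hgQ : ENNReal.ofReal M + unifErr g Q ≠ ⊤ :=
    ENNReal.add_ne_top.2 ⟨ENNReal.ofReal_ne_top, unifErr_ne_top hg Q⟩
  have hprod : Eerr m w (fun x => g x * f x) ≤
      (ENNReal.ofReal M + unifErr g Q) * Eerr n w f + unifErr g Q * ENNReal.ofReal F := by
    refine ENNReal.le_mul_iInf₂_add ⟨0, by simp⟩ hgQ fun P hP => ?_
    refine (iInf₂_le (Q * P) (natDegree_mul_le.trans (by omega))).trans ?_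
    refine (wnorm_mul_sub_mul_le (fun x hx => hg x (Ioo_subset_Icc_self hx)) hf Q P).trans
      (le_of_eq ?_)
    ring
  calc Eerr m w (fun x => g x * f x)
      ≤ ENNReal.ofReal M * Eerr n w f +
          (unifErr g Q * Eerr n w f + unifErr g Q * ENNReal.ofReal F) := by
        rw [← add_assoc, ← add_mul]; exact hprod
    _ ≤ ENNReal.ofReal M * Eerr n w f +
          (unifErr g Q * ENNReal.ofReal F + unifErr g Q * ENNReal.ofReal F) := by
        gcongr; exact Eerr_le_ofReal hf n
    _ = _ := by
        rw [ENNReal.ofReal_mul zero_le_two, ENNReal.ofReal_ofNat]; ring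

theorem statement13_general (γ δ : ℝ) (σ f : ℝ → ℝ)
    (Ms F : ℝ)
    (hMs : ∀ x ∈ Icc (-1 : ℝ) 1, |σ x * phiw x| ≤ Ms)
    (hF : ∀ x ∈ Ioo (-1 : ℝ) 1, |f x * (jw γ δ x * phiw x)| ≤ F)
    (m : ℕ) :
    Eerr m (fun x => jw γ δ x * phiw x) (fun x => σ x * phiw x * f x) ≤
      ENNReal.ofReal Ms * Eerr (m / 2) (fun x => jw γ δ x * phiw x) f +
        ENNReal.ofReal (2 * F) * EerrI (m / 2) (fun x => σ x * phiw x) := by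
  rw [add_comm]
  refine ENNReal.le_mul_iInf₂_add ⟨0, by simp⟩ ENNReal.ofReal_ne_top fun Q hQ => ?_
  rw [add_comm]
  exact Eerr_mul_le (g := fun x => σ x * phiw x) hMs hF (by omega) hQ

/-- If `σφ` extends continuously to `[-1,1]`, `‖σφ‖_∞ ≤ Ms` and
`‖f uφ‖_∞ ≤ F`, then for every `m ≥ 1`,
`E_m(σφ·f)_{uφ} ≤ Ms · E_{⌊m/2⌋}(f)_{uφ} + 2F · E_{⌊m/2⌋}(σφ)`,
the last error being unweighted best uniform approximation on `[-1,1]`. -/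
theorem statement13 (γ δ : ℝ) (hγ : 0 ≤ γ) (hδ : 0 ≤ δ) (σ f : ℝ → ℝ)
    (hσc : ContinuousOn (fun x => σ x * phiw x) (Icc (-1 : ℝ) 1))
    (Ms F : ℝ)
    (hMs : ∀ x ∈ Icc (-1 : ℝ) 1, |σ x * phiw x| ≤ Ms)
    (hF : ∀ x ∈ Ioo (-1 : ℝ) 1, |f x * (jw γ δ x * phiw x)| ≤ F)
    (m : ℕ) (hm : 1 ≤ m) :
    Eerr m (fun x => jw γ δ x * phiw x) (fun x => σ x * phiw x * f x) ≤
      ENNReal.ofReal Ms * Eerr (m / 2) (fun x => jw γ δ x * phiw x) f +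
        ENNReal.ofReal (2 * F) * EerrI (m / 2) (fun x => σ x * phiw x) :=
  statement13_general γ δ σ f Ms F hMs hF m
end
end
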